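/- Backward (gap) direction of the reduction from Restricted X3C to SAV swap bribery: let α be a positive integer, let X = {x_1,…,x_{3n}} and 𝒮 = {S_1,…,S_{3n}} be three-element subsets of X such that each element of X belongs to exactly three sets of 𝒮, and set N = 27(αn + 1). Build the approval election with candidates C = 𝒮 ∪ D ∪ {p}, where D is a set of N dummy candidates; for each element x_i one element voter approving exactly the three sets of 𝒮 that contain x_i; n·(N+3n) − 1 voters each approving all candidates in 𝒮 ∪ D; and 10nN voters each approving all candidates in D. If no n sets in 𝒮 have union X (no exact cover exists), then for every set of at most 3αn approval swaps, each moving an approval from some approved candidate to p within a vote, after performing these swaps p does not belong to any SAV-winning committee of size N + 2n + 1. -/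
import Mathlib


/-- Candidates for the X3C reduction: `some (Sum.inl j)` is the set candidate `S_j`,
`some (Sum.inr d)` is a dummy candidate, and `none` is the preferred candidate `p`. -/
abbrev XCand (n N : ℕ) := Option (Fin (3 * n) ⊕ Fin N)

/-- The value `N = 27(αn + 1)` used in the reduction. -/
abbrev NN (α n : ℕ) : ℕ := 27 * (α * n + 1)

/-- Voter index type: `3n` element voters, `n(N+3n) - 1` voters approving all set and dummy
candidates, and `10nN` voters approving all dummy candidates. -/
abbrev VIdx (α n : ℕ) :=
  Fin (3 * n) ⊕ Fin (n * (NN α n + 3 * n) - 1) ⊕ Fin (10 * n * NN α n)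

/-- The element voter for `x`: approves exactly the set candidates of sets containing `x`. -/
def elemVote (n N : ℕ) (S : Fin (3 * n) → Finset (Fin (3 * n))) (x : Fin (3 * n)) :
    Finset (XCand n N) :=
  (Finset.univ.filter (fun j => x ∈ S j)).image (fun j => some (Sum.inl j))

/-- The vote approving all set candidates and all dummy candidates. -/
def sdVote (n N : ℕ) : Finset (XCand n N) :=
  (Finset.univ : Finset (Fin (3 * n) ⊕ Fin N)).image some

/-- The vote approving all dummy candidates. -/
def dVote (n N : ℕ) : Finset (XCand n N) :=
  (Finset.univ : Finset (Fin N)).image (fun d => some (Sum.inr d))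

/-- The initial election of the reduction. -/
def initV (α n : ℕ) (S : Fin (3 * n) → Finset (Fin (3 * n))) :
    VIdx α n → Finset (XCand n (NN α n))
  | Sum.inl x => elemVote n (NN α n) S x
  | Sum.inr (Sum.inl _) => sdVote n (NN α n)
  | Sum.inr (Sum.inr _) => dVote n (NN α n)

/-- SAV score for an election given as an indexed family of votes. -/
def savScoreF {C ι : Type*} [DecidableEq C] [Fintype ι] (V : ι → Finset C) (c : C) : ℚ :=
  ∑ i : ι, if c ∈ V i then ((V i).card : ℚ)⁻¹ else 0

/-- `W` is an SAV-winning committee of size `k`. -/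
def SAVWinningF {C ι : Type*} [DecidableEq C] [Fintype ι] (V : ι → Finset C) (k : ℕ)
    (W : Finset C) : Prop :=
  W.card = k ∧ ∀ c ∈ W, ∀ d ∉ W, savScoreF V d ≤ savScoreF V c

section AUX
variable {n N : ℕ} {S : Fin (3 * n) → Finset (Fin (3 * n))}

lemma mem_elemVote {j : Fin (3*n)} {x : Fin (3*n)} :
    some (Sum.inl j) ∈ elemVote n N S x ↔ x ∈ S j := by
  simp [elemVote]

lemma none_not_elemVote {x : Fin (3*n)} : (none : XCand n N) ∉ elemVote n N S x := by
  simp [elemVote]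

lemma dummy_not_elemVote {d : Fin N} {x : Fin (3*n)} :
    some (Sum.inr d) ∉ elemVote n N S x := by simp [elemVote]

lemma none_not_sdVote : (none : XCand n N) ∉ sdVote n N := by simp [sdVote]

lemma mem_sdVote {y : Fin (3*n) ⊕ Fin N} : some y ∈ sdVote n N := by simp [sdVote]

lemma none_not_dVote : (none : XCand n N) ∉ dVote n N := by simp [dVote]

lemma mem_dVote {d : Fin N} : some (Sum.inr d) ∈ dVote n N := by simp [dVote]

lemma setc_not_dVote {j : Fin (3*n)} : some (Sum.inl j) ∉ dVote n N := by simp [dVote]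

lemma card_elemVote (hx3 : ∀ x : Fin (3 * n), (Finset.univ.filter (fun j => x ∈ S j)).card = 3)
    (x : Fin (3*n)) : (elemVote n N S x).card = 3 := by
  rw [elemVote, Finset.card_image_of_injective _ (fun a b h => by simpa using h), hx3]

lemma card_sdVote : (sdVote n N).card = 3*n + N := by
  rw [sdVote, Finset.card_image_of_injective _ (Option.some_injective _)]
  simp

lemma card_dVote : (dVote n N).card = N := by
  rw [dVote, Finset.card_image_of_injective _ (fun a b h => by simpa using h)]
  simp

end AUX
section MAIN
variable {α n : ℕ} {S : Fin (3 * n) → Finset (Fin (3 * n))}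

/-- The weight of voter `i`. -/
def qv (α n : ℕ) (S : Fin (3 * n) → Finset (Fin (3 * n))) (i : VIdx α n) : ℚ :=
  ((initV α n S i).card : ℚ)⁻¹

lemma qv_nonneg (i : VIdx α n) : 0 ≤ qv α n S i := by rw [qv]; positivity

lemma none_not_initV (i : VIdx α n) : (none : XCand n (NN α n)) ∉ initV α n S i := by
  rcases i with x | (i | k)
  · exact none_not_elemVote
  · exact none_not_sdVote
  · exact none_not_dVote

lemma qv_elem (hx3 : ∀ x : Fin (3 * n), (Finset.univ.filter (fun j => x ∈ S j)).card = 3)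
    (x : Fin (3 * n)) : qv α n S (Sum.inl x) = (3 : ℚ)⁻¹ := by
  rw [qv]; norm_cast; rw [show initV α n S (Sum.inl x) = elemVote n (NN α n) S x from rfl,
    card_elemVote hx3]; norm_num

lemma qv_inr_le (y : Fin (n * (NN α n + 3 * n) - 1) ⊕ Fin (10 * n * NN α n)) :
    qv α n S (Sum.inr y) ≤ ((NN α n : ℚ))⁻¹ := by
  have hNpos : (0 : ℚ) < (NN α n : ℚ) := by unfold NN; positivity
  rcases y with i | k
  · rw [qv, show initV α n S (Sum.inr (Sum.inl i)) = sdVote n (NN α n) from rfl, card_sdVote]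
    apply inv_anti₀ hNpos
    push_cast; linarith
  · rw [qv, show initV α n S (Sum.inr (Sum.inr k)) = dVote n (NN α n) from rfl, card_dVote]

lemma savScore_initV_eq (c : XCand n (NN α n)) :
    savScoreF (initV α n S) c = ∑ i, if c ∈ initV α n S i then qv α n S i else 0 := rfl

end MAIN
/-- backward (gap) direction of the reduction from Restricted X3C to SAV swap
bribery.  If the Restricted X3C instance has no exact cover, then for every set of at most
`3αn` approval swaps — each moving, within a distinct vote `i`, the approval of some approved
candidate `g i` to the (nowhere approved) candidate `p` (= `none`) — after applying the swaps
`p` does not belong to any SAV-winning committee of size `N + 2n + 1`, where `N = 27(αn+1)`. -/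
theorem stmt_7 (α n : ℕ) (hα : 0 < α) (hn : 0 < n)
    (S : Fin (3 * n) → Finset (Fin (3 * n)))
    (hS3 : ∀ j, (S j).card = 3)
    (hx3 : ∀ x : Fin (3 * n), (Finset.univ.filter (fun j => x ∈ S j)).card = 3)
    (hnocover : ¬ ∃ T : Finset (Fin (3 * n)), T.card = n ∧ ∀ x, ∃ j ∈ T, x ∈ S j) :
    ∀ (A : Finset (VIdx α n)) (g : VIdx α n → XCand n (NN α n)),
      A.card ≤ 3 * α * n →
      (∀ i ∈ A, g i ∈ initV α n S i ∧ (none : XCand n (NN α n)) ∉ initV α n S i) →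
      ∀ W : Finset (XCand n (NN α n)),
        SAVWinningF
          (fun i => if i ∈ A then insert none ((initV α n S i).erase (g i)) else initV α n S i)
          (NN α n + 2 * n + 1) W →
        (none : XCand n (NN α n)) ∉ W := by
  intro A g hAcard hg W hWin hpW
  set V' : VIdx α n → Finset (XCand n (NN α n)) :=
    fun i => if i ∈ A then insert none ((initV α n S i).erase (g i)) else initV α n S i
    with hV'
  obtain ⟨hWcard, hWcmp⟩ := hWin
  -- numeric facts
  have hNQ : (NN α n : ℚ) = 27 * ((α * n : ℕ) : ℚ) + 27 := by push_cast [NN]; ring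
  have hNpos : (0 : ℚ) < (NN α n : ℚ) := by unfold NN; positivity
  have hαn1 : (1 : ℚ) ≤ ((α * n : ℕ) : ℚ) := by exact_mod_cast Nat.mul_pos hα hn
  have hn1 : (1 : ℚ) ≤ (n : ℚ) := by exact_mod_cast hn
  have hinv27 : (NN α n : ℚ)⁻¹ ≤ 1 / 27 := by
    rw [one_div]
    exact inv_anti₀ (by norm_num) (by rw [hNQ]; linarith)
  have hAN : (A.card : ℚ) * (NN α n : ℚ)⁻¹ ≤ 1 / 9 := by
    have h1 : (A.card : ℚ) ≤ 3 * (α : ℚ) * (n : ℚ) := by exact_mod_cast hAcard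
    have h2 : (A.card : ℚ) * (NN α n : ℚ)⁻¹ ≤ (3 * (α : ℚ) * n) * (NN α n : ℚ)⁻¹ :=
      mul_le_mul_of_nonneg_right h1 (by positivity)
    refine h2.trans ?_
    rw [← div_eq_mul_inv, div_le_iff₀ hNpos, hNQ]
    push_cast
    nlinarith
  -- cards of bribed votes
  have hcardV' : ∀ i, (V' i).card = (initV α n S i).card := by
    intro i
    by_cases hi : i ∈ A
    · have hgi := (hg i hi).1
      have hpos : 0 < (initV α n S i).card := Finset.card_pos.mpr ⟨g i, hgi⟩
      simp only [hV', if_pos hi]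
      rw [Finset.card_insert_of_notMem
          (fun h => none_not_initV (S := S) i (Finset.mem_of_mem_erase h)),
        Finset.card_erase_of_mem hgi]
      omega
    · simp [hV', hi]
  have hscore : ∀ c, savScoreF V' c = ∑ i, if c ∈ V' i then qv α n S i else 0 := by
    intro c
    unfold savScoreF qv
    exact Finset.sum_congr rfl fun i _ => by rw [hcardV' i]
  set L : ℚ := ∑ i, (if i ∈ A then qv α n S i else 0) with hL
  have hscoreP : savScoreF V' none = L := by
    rw [hscore]
    refine Finset.sum_congr rfl fun i _ => ?_
    by_cases hi : i ∈ A
    · simp [hV', hi]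
    · simp [hV', hi, none_not_initV (S := S) i]
  -- splitting sums over voters
  have hsplit : ∀ f : VIdx α n → ℚ, ∑ i, f i =
      (∑ x : Fin (3 * n), f (Sum.inl x)) +
        ∑ y : Fin (n * (NN α n + 3 * n) - 1) ⊕ Fin (10 * n * NN α n), f (Sum.inr y) :=
    fun f => Fintype.sum_sum_type f
  have hsplit3 : ∀ f : VIdx α n → ℚ, ∑ i, f i =
      (∑ x : Fin (3 * n), f (Sum.inl x)) +
      ((∑ i : Fin (n * (NN α n + 3 * n) - 1), f (Sum.inr (Sum.inl i))) +
       (∑ k : Fin (10 * n * NN α n), f (Sum.inr (Sum.inr k)))) := by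
    intro f; rw [Fintype.sum_sum_type, Fintype.sum_sum_type]
  have hrest : ∀ B : Finset (Fin (n * (NN α n + 3 * n) - 1) ⊕ Fin (10 * n * NN α n)),
      (∀ y ∈ B, Sum.inr y ∈ A) →
      (∑ y ∈ B, qv α n S (Sum.inr y)) ≤ (A.card : ℚ) * (NN α n : ℚ)⁻¹ := by
    intro B hB
    calc ∑ y ∈ B, qv α n S (Sum.inr y) ≤ ∑ _y ∈ B, (NN α n : ℚ)⁻¹ :=
        Finset.sum_le_sum fun y _ => qv_inr_le y
      _ = (B.card : ℚ) * (NN α n : ℚ)⁻¹ := by rw [Finset.sum_const, nsmul_eq_mul]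
      _ ≤ _ := by
        apply mul_le_mul_of_nonneg_right _ (by positivity)
        exact_mod_cast Finset.card_le_card_of_injOn (fun y => Sum.inr y) hB
          (fun a _ b _ h => by injection h)
  -- bound on p's score
  have hLbound : L ≤ (n : ℚ) + (A.card : ℚ) * (NN α n : ℚ)⁻¹ := by
    rw [hL, hsplit]
    have he : (∑ x : Fin (3 * n), if Sum.inl x ∈ A then qv α n S (Sum.inl x) else 0)
        ≤ (n : ℚ) := by
      calc (∑ x : Fin (3 * n), if Sum.inl x ∈ A then qv α n S (Sum.inl x) else 0)
          ≤ ∑ _x : Fin (3 * n), (3 : ℚ)⁻¹ := by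
            refine Finset.sum_le_sum fun x _ => ?_
            rw [qv_elem hx3]
            split <;> norm_num
        _ = (n : ℚ) := by
            rw [Finset.sum_const, Finset.card_univ, Fintype.card_fin, nsmul_eq_mul]
            push_cast; ring
    have hr : (∑ y, if Sum.inr y ∈ A then qv α n S (Sum.inr y) else 0)
        ≤ (A.card : ℚ) * (NN α n : ℚ)⁻¹ := by
      rw [← Finset.sum_filter]
      exact hrest _ (fun y hy => (Finset.mem_filter.mp hy).2)
    exact add_le_add he hr
  have hL9 : L ≤ (n : ℚ) + 1 / 9 := hLbound.trans (by linarith)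
  -- bribed score is at least initial score minus the loss
  have hlow : ∀ c : XCand n (NN α n), c ≠ none →
      savScoreF (initV α n S) c - (∑ i, if i ∈ A ∧ g i = c then qv α n S i else 0)
        ≤ savScoreF V' c := by
    intro c hc
    rw [hscore, savScore_initV_eq, sub_le_iff_le_add, ← Finset.sum_add_distrib]
    refine Finset.sum_le_sum fun i _ => ?_
    by_cases hiA : i ∈ A
    · by_cases hgc : g i = c
      · rw [if_pos (show i ∈ A ∧ g i = c from ⟨hiA, hgc⟩)]
        have h1 : (if c ∈ initV α n S i then qv α n S i else 0) ≤ qv α n S i := by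
          split
          · exact le_rfl
          · exact qv_nonneg i
        have h2 : (0 : ℚ) ≤ (if c ∈ V' i then qv α n S i else 0) := by
          split
          · exact qv_nonneg i
          · exact le_rfl
        linarith
      · have hmem : c ∈ V' i ↔ c ∈ initV α n S i := by
          simp only [hV', if_pos hiA, Finset.mem_insert, Finset.mem_erase]
          constructor
          · rintro (h | h)
            · exact absurd h hc
            · exact h.2
          · intro h
            exact Or.inr ⟨fun he => hgc he.symm, h⟩
        rw [if_neg (fun h : i ∈ A ∧ g i = c => hgc h.2), add_zero]
        simp only [hmem]
        exact le_rfl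
    · rw [if_neg (fun h : i ∈ A ∧ g i = c => hiA h.1), add_zero]
      have hVi : V' i = initV α n S i := by simp [hV', hiA]
      rw [hVi]
  -- loss is at most L
  have hLossD : ∀ c : XCand n (NN α n),
      (∑ i, if i ∈ A ∧ g i = c then qv α n S i else 0) ≤ L := by
    intro c
    rw [hL]
    refine Finset.sum_le_sum fun i _ => ?_
    by_cases h : i ∈ A ∧ g i = c
    · rw [if_pos h, if_pos h.1]
    · rw [if_neg h]
      split
      · exact qv_nonneg i
      · exact le_rfl
  -- base score of dummies
  have hbaseD : ∀ d : Fin (NN α n),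
      (10 * (n : ℚ)) ≤ savScoreF (initV α n S) (some (Sum.inr d)) := by
    intro d
    rw [savScore_initV_eq, hsplit3]
    have h1 : (∑ x : Fin (3 * n), if some (Sum.inr d) ∈ initV α n S (Sum.inl x) then
        qv α n S (Sum.inl x) else 0) = 0 :=
      Finset.sum_eq_zero fun x _ => by
        rw [show initV α n S (Sum.inl x) = elemVote n (NN α n) S x from rfl]
        exact if_neg dummy_not_elemVote
    have h2 : (0 : ℚ) ≤ ∑ i : Fin (n * (NN α n + 3 * n) - 1),
        (if some (Sum.inr d) ∈ initV α n S (Sum.inr (Sum.inl i)) then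
          qv α n S (Sum.inr (Sum.inl i)) else 0) :=
      Finset.sum_nonneg fun i _ => by
        split
        · exact qv_nonneg _
        · exact le_rfl
    have h3 : (∑ k : Fin (10 * n * NN α n), if some (Sum.inr d) ∈ initV α n S (Sum.inr (Sum.inr k))
        then qv α n S (Sum.inr (Sum.inr k)) else 0) = 10 * (n : ℚ) := by
      have hterm : ∀ k : Fin (10 * n * NN α n),
          (if some (Sum.inr d) ∈ initV α n S (Sum.inr (Sum.inr k)) then
            qv α n S (Sum.inr (Sum.inr k)) else 0) = (NN α n : ℚ)⁻¹ := by
        intro k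
        rw [qv, show initV α n S (Sum.inr (Sum.inr k)) = dVote n (NN α n) from rfl,
          if_pos mem_dVote, card_dVote]
      rw [Finset.sum_congr rfl fun k _ => hterm k, Finset.sum_const, Finset.card_univ,
        Fintype.card_fin, nsmul_eq_mul]
      have hNne : (NN α n : ℚ) ≠ 0 := ne_of_gt hNpos
      push_cast
      field_simp
    rw [h1, h3]
    linarith
  -- base score of set candidates
  have hbaseS : ∀ j, 1 + (n : ℚ) - (NN α n : ℚ)⁻¹ ≤ savScoreF (initV α n S) (some (Sum.inl j)) := by
    intro j
    rw [savScore_initV_eq, hsplit3]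
    have hmQ : (0 : ℚ) < ((3 * n + NN α n : ℕ) : ℚ) := by
      have : (0:ℕ) < 3 * n + NN α n := by unfold NN; positivity
      exact_mod_cast this
    have h1 : (∑ x : Fin (3 * n), if some (Sum.inl j) ∈ initV α n S (Sum.inl x) then
        qv α n S (Sum.inl x) else 0) = 1 := by
      have hterm : ∀ x : Fin (3 * n),
          (if some (Sum.inl j) ∈ initV α n S (Sum.inl x) then qv α n S (Sum.inl x) else 0)
            = if x ∈ S j then (3 : ℚ)⁻¹ else 0 := by
        intro x
        rw [show initV α n S (Sum.inl x) = elemVote n (NN α n) S x from rfl]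
        by_cases hx : x ∈ S j
        · rw [if_pos (mem_elemVote.mpr hx), if_pos hx, qv_elem hx3]
        · rw [if_neg (fun h => hx (mem_elemVote.mp h)), if_neg hx]
      rw [Finset.sum_congr rfl fun x _ => hterm x, Finset.sum_ite_mem, Finset.univ_inter,
        Finset.sum_const, hS3 j]
      norm_num
    have h2 : (n : ℚ) - (NN α n : ℚ)⁻¹ ≤ ∑ i : Fin (n * (NN α n + 3 * n) - 1),
        (if some (Sum.inl j) ∈ initV α n S (Sum.inr (Sum.inl i)) then
          qv α n S (Sum.inr (Sum.inl i)) else 0) := by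
      have hterm : ∀ i : Fin (n * (NN α n + 3 * n) - 1),
          (if some (Sum.inl j) ∈ initV α n S (Sum.inr (Sum.inl i)) then
            qv α n S (Sum.inr (Sum.inl i)) else 0) = ((3 * n + NN α n : ℕ) : ℚ)⁻¹ := by
        intro i
        rw [qv, show initV α n S (Sum.inr (Sum.inl i)) = sdVote n (NN α n) from rfl,
          if_pos mem_sdVote, card_sdVote]
      rw [Finset.sum_congr rfl fun i _ => hterm i, Finset.sum_const, Finset.card_univ,
        Fintype.card_fin, nsmul_eq_mul]
      have hm1 : 1 ≤ n * (NN α n + 3 * n) := by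
        have h27 : 27 ≤ NN α n := by unfold NN; nlinarith
        nlinarith
      have hcast : ((n * (NN α n + 3 * n) - 1 : ℕ) : ℚ)
          = (n : ℚ) * ((3 * n + NN α n : ℕ) : ℚ) - 1 := by
        rw [Nat.cast_sub hm1]
        push_cast; ring
      rw [hcast]
      have hminv : ((3 * n + NN α n : ℕ) : ℚ)⁻¹ ≤ (NN α n : ℚ)⁻¹ := by
        apply inv_anti₀ hNpos
        push_cast; linarith
      have hexp : ((n : ℚ) * ((3 * n + NN α n : ℕ) : ℚ) - 1) * ((3 * n + NN α n : ℕ) : ℚ)⁻¹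
          = (n : ℚ) - ((3 * n + NN α n : ℕ) : ℚ)⁻¹ := by
        field_simp
      rw [hexp]
      linarith
    have h3 : (0 : ℚ) ≤ ∑ k : Fin (10 * n * NN α n),
        (if some (Sum.inl j) ∈ initV α n S (Sum.inr (Sum.inr k)) then
          qv α n S (Sum.inr (Sum.inr k)) else 0) :=
      Finset.sum_nonneg fun k _ => by
        split
        · exact qv_nonneg _
        · exact le_rfl
    linarith
  -- loss of a set candidate
  set Hf : Fin (3 * n) → Finset (Fin (3 * n)) := fun j =>
    Finset.univ.filter (fun x : Fin (3 * n) => Sum.inl x ∈ A ∧ g (Sum.inl x) = some (Sum.inl j))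
    with hHf
  have hLossS : ∀ j : Fin (3 * n),
      (∑ i, if i ∈ A ∧ g i = some (Sum.inl j) then qv α n S i else 0)
        ≤ ((Hf j).card : ℚ) * (3 : ℚ)⁻¹ + (A.card : ℚ) * (NN α n : ℚ)⁻¹ := by
    intro j
    rw [hsplit]
    apply add_le_add
    · have hterm : ∀ x : Fin (3 * n),
          (if Sum.inl x ∈ A ∧ g (Sum.inl x) = some (Sum.inl j) then qv α n S (Sum.inl x) else 0)
            = if Sum.inl x ∈ A ∧ g (Sum.inl x) = some (Sum.inl j) then (3 : ℚ)⁻¹ else 0 :=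
        fun x => by rw [qv_elem hx3]
      rw [Finset.sum_congr rfl fun x _ => hterm x, ← Finset.sum_filter, Finset.sum_const,
        nsmul_eq_mul, hHf]
    · rw [← Finset.sum_filter]
      exact hrest _ (fun y hy => (Finset.mem_filter.mp hy).2.1)
  -- every dummy is in W
  have hdumW : ∀ d : Fin (NN α n), some (Sum.inr d) ∈ W := by
    intro d
    by_contra hd
    have h1 := hWcmp none hpW _ hd
    rw [hscoreP] at h1
    have h2 := hlow (some (Sum.inr d)) (by simp)
    have h3 := hLossD (some (Sum.inr d))
    have h4 := hbaseD d
    linarith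
  -- excluded set candidates are fully hit
  have hHsub : ∀ j, Hf j ⊆ S j := by
    intro j x hx
    have hx' := Finset.mem_filter.mp hx
    have hmem := (hg _ hx'.2.1).1
    rw [hx'.2.2] at hmem
    exact mem_elemVote.mp hmem
  have hT3 : ∀ j, some (Sum.inl j) ∉ W → Hf j = S j := by
    intro j hj
    refine Finset.eq_of_subset_of_card_le (hHsub j) ?_
    rw [hS3 j]
    have h1 := hWcmp none hpW _ hj
    rw [hscoreP] at h1
    have h2 := hlow (some (Sum.inl j)) (by simp)
    have h3 := hLossS j
    have h4 := hbaseS j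
    have hgt : (2 : ℚ) < ((Hf j).card : ℚ) := by linarith
    have hgt' : 2 < (Hf j).card := by exact_mod_cast hgt
    omega
  -- the excluded set candidates
  set T : Finset (Fin (3 * n)) := Finset.univ.filter (fun j => some (Sum.inl j) ∉ W) with hT
  have hinj : Function.Injective (fun j : Fin (3 * n) => (some (Sum.inl j) : XCand n (NN α n))) :=
    fun a b h => by simpa using h
  have hTimage : Finset.univ \ W = T.image (fun j => some (Sum.inl j)) := by
    ext c
    constructor
    · intro hc
      have hcW : c ∉ W := (Finset.mem_sdiff.mp hc).2
      match c with
      | none => exact absurd hpW hcW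
      | some (Sum.inl j) =>
          refine Finset.mem_image.mpr ⟨j, ?_, rfl⟩
          rw [hT]
          exact Finset.mem_filter.mpr ⟨Finset.mem_univ j, hcW⟩
      | some (Sum.inr d) => exact absurd (hdumW d) hcW
    · intro hc
      obtain ⟨j, hj, rfl⟩ := Finset.mem_image.mp hc
      rw [hT] at hj
      exact Finset.mem_sdiff.mpr ⟨Finset.mem_univ _, (Finset.mem_filter.mp hj).2⟩
  have hTcard : T.card = n := by
    have h1 : (Finset.univ \ W).card = Fintype.card (XCand n (NN α n)) - W.card := by
      rw [Finset.card_sdiff_of_subset (Finset.subset_univ W), Finset.card_univ]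
    have hcC : Fintype.card (XCand n (NN α n)) = 3 * n + NN α n + 1 := by
      simp [XCand]
    rw [hTimage, Finset.card_image_of_injective _ hinj] at h1
    rw [hcC, hWcard] at h1
    omega
  have hTS : ∀ j ∈ T, Hf j = S j := by
    intro j hj
    rw [hT] at hj
    exact hT3 j (Finset.mem_filter.mp hj).2
  have hdisj : ∀ j ∈ T, ∀ j' ∈ T, j ≠ j' → Disjoint (S j) (S j') := by
    intro j hj j' hj' hne
    rw [Finset.disjoint_left]
    intro x hxj hxj'
    rw [← hTS j hj] at hxj
    rw [← hTS j' hj'] at hxj'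
    have h1 := (Finset.mem_filter.mp hxj).2.2
    have h2 := (Finset.mem_filter.mp hxj').2.2
    rw [h1] at h2
    exact hne (by simpa using h2)
  have hcover : T.biUnion S = Finset.univ := by
    apply Finset.eq_univ_of_card
    rw [Finset.card_biUnion hdisj, Finset.sum_congr rfl fun j _ => hS3 j, Finset.sum_const,
      hTcard]
    simp [Fintype.card_fin, mul_comm]
  exact hnocover ⟨T, hTcard, fun x => Finset.mem_biUnion.mp (by rw [hcover]; exact Finset.mem_univ x)⟩
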